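/- arXiv:1509.07644 — 3 statements merged into one kernel-verified Lean document; each statement's English description precedes it below -/
import Mathlib

section
/- Let p be an odd prime and let c, d be integers with p ∤ c. Then the Salié-type sum Σ_{x ∈ F_p^×} (x/p) e((c x + d x^{-1})/p) has absolute value at most 2√p. -/
noncomputable def e (t : ℂ) : ℂ := Complex.exp (2 * Real.pi * Complex.I * t)

noncomputable section
namespace Salie
variable (p : ℕ) [Fact p.Prime]

def ζ : ℂ := Complex.exp (2 * Real.pi * Complex.I / p)

lemma zeta_pow : ζ p ^ p = 1 :=
  (Complex.isPrimitiveRoot_exp p (Fact.out : p.Prime).ne_zero).pow_eq_one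

def ψ : AddChar (ZMod p) ℂ := AddChar.zmodChar p (zeta_pow p)

lemma psi_prim : (ψ p).IsPrimitive :=
  AddChar.zmodChar_primitive_of_primitive_root p
    (Complex.isPrimitiveRoot_exp p (Fact.out : p.Prime).ne_zero)

def χ : MulChar (ZMod p) ℂ := (quadraticChar (ZMod p)).ringHomComp (Int.castRingHom ℂ)

lemma chi_quadratic : (χ p).IsQuadratic :=
  (quadraticChar_isQuadratic (ZMod p)).comp _

lemma ringChar_ne_two (hp2 : p ≠ 2) : ringChar (ZMod p) ≠ 2 := by
  rw [ZMod.ringChar_zmod_n]; exact hp2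

lemma chi_ne_one (hp2 : p ≠ 2) : χ p ≠ 1 :=
  (MulChar.ringHomComp_ne_one_iff (Int.cast_injective (α := ℂ))).mpr
    (quadraticChar_ne_one (ringChar_ne_two p hp2))

lemma gauss_sq (hp2 : p ≠ 2) : gaussSum (χ p) (ψ p) ^ 2 = (χ p) (-1) * p := by
  have := gaussSum_sq (chi_ne_one p hp2) (chi_quadratic p) (psi_prim p)
  rwa [ZMod.card] at this

lemma abs_psi (a : ZMod p) : ‖ψ p a‖ = 1 := by
  rw [ψ, AddChar.zmodChar_apply, norm_pow, ζ]
  have : ‖Complex.exp (2 * Real.pi * Complex.I / p)‖ = 1 := by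
    rw [show (2 * Real.pi * Complex.I / p) = ((2 * Real.pi / p : ℝ) : ℂ) * Complex.I by
      push_cast; ring]
    exact Complex.norm_exp_ofReal_mul_I _
  rw [this, one_pow]

lemma chi_val (x : ZMod p) : χ p x = ((quadraticChar (ZMod p) x : ℤ) : ℂ) := rfl

lemma abs_chi (x : ZMod p) (hx : x ≠ 0) : ‖χ p x‖ = 1 := by
  rw [chi_val]
  rcases quadraticChar_dichotomy hx with h | h <;> rw [h] <;> simp

lemma abs_gauss (hp2 : p ≠ 2) : ‖gaussSum (χ p) (ψ p)‖ = Real.sqrt p := by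
  have h2 : ‖gaussSum (χ p) (ψ p)‖ ^ 2 = p := by
    rw [← norm_pow, gauss_sq p hp2, norm_mul, abs_chi p _ (by simp), one_mul, Complex.norm_natCast]
  rw [← Real.sqrt_sq (norm_nonneg _), h2]

lemma chi_zero : χ p 0 = 0 := by simp [chi_val]

lemma chi_sq_one (x : ZMod p) (hx : x ≠ 0) : χ p x * χ p x = 1 := by
  rw [chi_val, ← Int.cast_mul, ← sq, quadraticChar_sq_one hx, Int.cast_one]

lemma chi_inv (x : ZMod p) : χ p x⁻¹ = χ p x := by
  rcases eq_or_ne x 0 with rfl | hx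
  · rw [inv_zero]
  · have h1 : χ p x⁻¹ * χ p x = 1 := by
      rw [← map_mul, inv_mul_cancel₀ hx]
      exact (χ p).map_one
    have h2 := chi_sq_one p x hx
    calc χ p x⁻¹ = χ p x⁻¹ * (χ p x * χ p x) := by rw [h2, mul_one]
      _ = (χ p x⁻¹ * χ p x) * χ p x := by ring
      _ = χ p x := by rw [h1, one_mul]

lemma psi_ne_zero : ψ p ≠ 0 := by
  rw [AddChar.ne_zero_iff]
  refine ⟨1, ?_⟩
  have hprim := Complex.isPrimitiveRoot_exp p (Fact.out : p.Prime).ne_zero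
  have h1 : (1 : ZMod p).val = 1 := ZMod.val_one p
  rw [ψ, AddChar.zmodChar_apply, h1, pow_one]
  exact hprim.ne_one (Fact.out : p.Prime).one_lt

lemma GS0 (a : ZMod p) (ha : a ≠ 0) : ∑ x : ZMod p, ψ p (a * x) = 0 := by
  have : ∑ x : ZMod p, ψ p (a * x) = ∑ x : ZMod p, ψ p x :=
    Fintype.sum_bijective (a * ·) (mulLeft_bijective₀ a ha) _ _ fun x => rfl
  rw [this]
  exact AddChar.sum_eq_zero_iff_ne_zero.mpr (psi_ne_zero p)

lemma GS1 (a : ZMod p) (ha : a ≠ 0) :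
    ∑ x : ZMod p, χ p x * ψ p (a * x) = χ p a * gaussSum (χ p) (ψ p) := by
  have h := gaussSum_mulShift (χ p) (ψ p) (Units.mk0 a ha)
  have h2 : gaussSum (χ p) ((ψ p).mulShift (Units.mk0 a ha)) =
      ∑ x : ZMod p, χ p x * ψ p (a * x) := by
    simp [gaussSum, AddChar.mulShift_apply]
  rw [h2] at h
  have := congrArg (fun z => χ p a * z) h.symm
  rw [this, ← mul_assoc]
  norm_num [chi_sq_one p a ha]

open Finset in
lemma fiber_sum (s : Finset (ZMod p)) (g : ZMod p → ZMod p) (f : ZMod p → ℂ) :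
    ∑ y ∈ s, f (g y) = ∑ t : ZMod p, ((s.filter (fun y => g y = t)).card : ℂ) * f t := by
  have h1 : ∀ t : ZMod p, ∑ y ∈ s.filter (fun y => g y = t), f (g y)
      = ((s.filter (fun y => g y = t)).card : ℂ) * f t := by
    intro t
    rw [Finset.sum_congr rfl (fun y hy => by rw [(Finset.mem_filter.mp hy).2]),
        Finset.sum_const, nsmul_eq_mul]
  calc ∑ y ∈ s, f (g y)
      = ∑ t : ZMod p, ∑ y ∈ s.filter (fun y => g y = t), f (g y) :=
        (Finset.sum_fiberwise_of_maps_to (fun x _ => Finset.mem_univ (g x)) _).symm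
    _ = _ := Finset.sum_congr rfl fun t _ => h1 t

lemma card_sqrts (hp2 : p ≠ 2) (x : ZMod p) :
    (((Finset.univ.filter (fun z : ZMod p => z ^ 2 = x)).card : ℤ) : ℂ) = 1 + χ p x := by
  have h := quadraticChar_card_sqrts (ringChar_ne_two p hp2) x
  rw [Set.toFinset_setOf] at h
  rw [h]
  push_cast [chi_val]
  ring

lemma SQfull (hp2 : p ≠ 2) (G : ZMod p → ℂ) :
    ∑ t : ZMod p, G (t ^ 2) = ∑ x : ZMod p, (1 + χ p x) * G x := by
  rw [fiber_sum p Finset.univ (fun t => t ^ 2) G]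
  refine Finset.sum_congr rfl fun x _ => ?_
  rw [show (((Finset.univ.filter (fun t : ZMod p => t ^ 2 = x)).card : ℕ) : ℂ)
      = (((Finset.univ.filter (fun t : ZMod p => t ^ 2 = x)).card : ℤ) : ℂ) by push_cast; rfl,
    card_sqrts p hp2 x]

lemma two_ne_zero' (hp2 : p ≠ 2) : (2 : ZMod p) ≠ 0 := by
  intro h
  rw [show (2 : ZMod p) = ((2 : ℕ) : ZMod p) by norm_cast,
    ZMod.natCast_eq_zero_iff] at h
  exact hp2 ((Nat.prime_dvd_prime_iff_eq (Fact.out : p.Prime) Nat.prime_two).mp h)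

lemma card_fiber (hp2 : p ≠ 2) (t : ZMod p) :
    ((((Finset.univ.erase (0 : ZMod p)).filter (fun y => y + y⁻¹ = t)).card : ℂ))
      = 1 + χ p (t ^ 2 - 4) := by
  have h2 : (2 : ZMod p) ≠ 0 := two_ne_zero' p hp2
  set u := (2 : ZMod p)⁻¹ with hu_def
  have hu : 2 * u = 1 := mul_inv_cancel₀ h2
  have hu0 : u ≠ 0 := inv_ne_zero h2
  have hcard : ((Finset.univ.erase (0 : ZMod p)).filter (fun y => y + y⁻¹ = t)).card
      = (Finset.univ.filter (fun z : ZMod p => z ^ 2 = (t ^ 2 - 4) * u ^ 2)).card := by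
    apply Finset.card_nbij' (fun y => y - t * u) (fun z => z + t * u)
    · intro y hy
      rw [Finset.mem_coe, Finset.mem_filter, Finset.mem_erase] at hy
      obtain ⟨⟨hy0, -⟩, hyt⟩ := hy
      have hty : y * y + 1 = t * y := by
        field_simp at hyt
        linear_combination hyt
      simp only [Finset.mem_coe, Finset.mem_filter, Finset.mem_univ, true_and]
      linear_combination hty + (-t * y + 2 * u + 1) * hu
    · intro z hz
      rw [Finset.mem_coe, Finset.mem_filter] at hz
      obtain ⟨-, hz⟩ := hz
      have hyy : (z + t * u) * (z + t * u) + 1 = t * (z + t * u) := by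
        linear_combination hz + (t * z + t ^ 2 * u - 2 * u - 1) * hu
      have hy0 : z + t * u ≠ 0 := by
        intro h0
        rw [h0] at hyy
        simp at hyy
      rw [Finset.mem_coe, Finset.mem_filter, Finset.mem_erase]
      refine ⟨⟨hy0, Finset.mem_univ _⟩, ?_⟩
      field_simp
      linear_combination hyy
    · intro y _; ring
    · intro z _; ring
  rw [hcard,
    show (((Finset.univ.filter (fun z : ZMod p => z ^ 2 = (t ^ 2 - 4) * u ^ 2)).card : ℕ) : ℂ)
      = (((Finset.univ.filter
          (fun z : ZMod p => z ^ 2 = (t ^ 2 - 4) * u ^ 2)).card : ℤ) : ℂ) by push_cast; rfl,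
    card_sqrts p hp2]
  rw [map_mul, show (u ^ 2 : ZMod p) = u * u by ring, map_mul (χ p), chi_sq_one p u hu0, mul_one]

lemma CL (hp2 : p ≠ 2) (f : ZMod p → ℂ) :
    ∑ y ∈ Finset.univ.erase (0 : ZMod p), f (y + y⁻¹)
      = ∑ t : ZMod p, (1 + χ p (t ^ 2 - 4)) * f t := by
  rw [fiber_sum p _ (fun y => y + y⁻¹) f]
  refine Finset.sum_congr rfl fun t _ => ?_
  rw [card_fiber p hp2 t]

lemma T_eval (hp2 : p ≠ 2) (α : ZMod p) (hα : α ≠ 0) :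
    ∑ x : ZMod p, χ p x * ψ p (α * (x + x⁻¹))
      = χ p α * gaussSum (χ p) (ψ p) * (ψ p (2 * α) + ψ p (-(2 * α))) := by
  set g := gaussSum (χ p) (ψ p) with hg
  set R2 := ∑ t : ZMod p, χ p (t ^ 2 - 4) * ψ p (α * t) with hR2
  have hzero : ∑ x : ZMod p, ψ p (α * x) = 0 := GS0 p α hα
  have hgauss : ∑ x : ZMod p, χ p x * ψ p (α * x) = χ p α * g := GS1 p α hα
  have hSq : ∑ t : ZMod p, ψ p (α * t ^ 2) = χ p α * g := by
    have h := SQfull p hp2 (fun x => ψ p (α * x))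
    rw [h]
    simp only [add_mul, one_mul]
    rw [Finset.sum_add_distrib, hzero, hgauss, zero_add]
  have e1 : ∑ y : ZMod p, ψ p (α * (y ^ 2 + (y ^ 2)⁻¹))
      = (∑ x : ZMod p, ψ p (α * (x + x⁻¹)))
        + ∑ x : ZMod p, χ p x * ψ p (α * (x + x⁻¹)) := by
    have h := SQfull p hp2 (fun x => ψ p (α * (x + x⁻¹)))
    rw [h]
    simp only [add_mul, one_mul]
    rw [Finset.sum_add_distrib]
  have e2 : ∑ x : ZMod p, ψ p (α * (x + x⁻¹)) = 1 + R2 := by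
    rw [← Finset.add_sum_erase Finset.univ (fun x : ZMod p => ψ p (α * (x + x⁻¹)))
      (Finset.mem_univ 0)]
    have h0 : ψ p (α * ((0 : ZMod p) + (0 : ZMod p)⁻¹)) = 1 := by
      simp [AddChar.map_zero_eq_one]
    rw [h0]
    congr 1
    have h := CL p hp2 (fun t => ψ p (α * t))
    rw [h]
    simp only [add_mul, one_mul]
    rw [Finset.sum_add_distrib, hzero, zero_add]
  have e3 : ∑ y : ZMod p, ψ p (α * (y ^ 2 + (y ^ 2)⁻¹))
      = 1 + (ψ p (-(2 * α)) * (χ p α * g) + (ψ p (2 * α) * (χ p α * g) + R2)) := by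
    rw [← Finset.add_sum_erase Finset.univ (fun y : ZMod p => ψ p (α * (y ^ 2 + (y ^ 2)⁻¹)))
      (Finset.mem_univ 0)]
    have h0 : ψ p (α * (((0 : ZMod p)) ^ 2 + (((0 : ZMod p)) ^ 2)⁻¹)) = 1 := by
      simp [AddChar.map_zero_eq_one]
    rw [h0]
    congr 1
    have hstep : ∑ y ∈ Finset.univ.erase (0 : ZMod p), ψ p (α * (y ^ 2 + (y ^ 2)⁻¹))
        = ∑ y ∈ Finset.univ.erase (0 : ZMod p), ψ p (α * ((y + y⁻¹) ^ 2 - 2)) := by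
      refine Finset.sum_congr rfl fun y hy => ?_
      have hy0 : y ≠ 0 := (Finset.mem_erase.mp hy).1
      have hinner : y ^ 2 + (y ^ 2)⁻¹ = (y + y⁻¹) ^ 2 - 2 := by
        field_simp
        ring
      rw [hinner]
    rw [hstep]
    have h := CL p hp2 (fun t => ψ p (α * (t ^ 2 - 2)))
    rw [h]
    simp only [add_mul, one_mul]
    rw [Finset.sum_add_distrib]
    have hA : ∑ t : ZMod p, ψ p (α * (t ^ 2 - 2)) = ψ p (-(2 * α)) * (χ p α * g) := by
      have hterm : ∀ t : ZMod p, ψ p (α * (t ^ 2 - 2)) = ψ p (α * t ^ 2) * ψ p (-(2 * α)) := by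
        intro t
        rw [← AddChar.map_add_eq_mul]
        congr 1
        ring
      rw [Finset.sum_congr rfl fun t _ => hterm t, ← Finset.sum_mul, hSq]
      ring
    have hB : ∑ t : ZMod p, χ p (t ^ 2 - 4) * ψ p (α * (t ^ 2 - 2))
        = ψ p (2 * α) * (χ p α * g) + R2 := by
      have h := SQfull p hp2 (fun u => χ p (u - 4) * ψ p (α * (u - 2)))
      rw [h]
      simp only [add_mul, one_mul]
      rw [Finset.sum_add_distrib]
      have hB1 : ∑ u : ZMod p, χ p (u - 4) * ψ p (α * (u - 2)) = ψ p (2 * α) * (χ p α * g) := by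
        have hre := Equiv.sum_comp (Equiv.addRight (4 : ZMod p))
          (fun u : ZMod p => χ p (u - 4) * ψ p (α * (u - 2)))
        rw [← hre]
        simp only [Equiv.coe_addRight]
        have hterm : ∀ v : ZMod p, χ p (v + 4 - 4) * ψ p (α * (v + 4 - 2))
            = χ p v * ψ p (α * v) * ψ p (2 * α) := by
          intro v
          rw [show v + 4 - 4 = v by ring, show α * (v + 4 - 2) = α * v + 2 * α by ring,
            AddChar.map_add_eq_mul]
          ring
        rw [Finset.sum_congr rfl fun v _ => hterm v, ← Finset.sum_mul, hgauss]
        ring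
      have hB2 : ∑ u : ZMod p, χ p u * (χ p (u - 4) * ψ p (α * (u - 2))) = R2 := by
        have hre := Equiv.sum_comp (Equiv.addRight (2 : ZMod p))
          (fun u : ZMod p => χ p u * (χ p (u - 4) * ψ p (α * (u - 2))))
        rw [← hre]
        simp only [Equiv.coe_addRight]
        rw [hR2]
        refine Finset.sum_congr rfl fun t _ => ?_
        rw [show t + 2 - 4 = t - 2 by ring, show α * (t + 2 - 2) = α * t by ring,
          ← mul_assoc, ← map_mul, show (t + 2) * (t - 2) = t ^ 2 - 4 by ring]
      rw [hB1, hB2]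
    rw [hA, hB]
  linear_combination e3 - e1 - e2

lemma stepB (a b : ZMod p) (hb : b ≠ 0) :
    ∑ x : ZMod p, χ p x * ψ p (a * x + b * x⁻¹)
      = χ p b * ∑ x : ZMod p, χ p x * ψ p (x + (a * b) * x⁻¹) := by
  have hinv : Function.Involutive (fun x : ZMod p => b * x⁻¹) := by
    intro x
    rcases eq_or_ne x 0 with rfl | hx
    · simp
    · simp only
      rw [mul_inv, inv_inv, ← mul_assoc, mul_inv_cancel₀ hb, one_mul]
  have hre := Equiv.sum_comp (hinv.toPerm)
    (fun x : ZMod p => χ p x * ψ p (a * x + b * x⁻¹))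
  have hterm : ∀ x : ZMod p, χ p (b * x⁻¹) * ψ p (a * (b * x⁻¹) + b * (b * x⁻¹)⁻¹)
      = χ p b * (χ p x * ψ p (x + (a * b) * x⁻¹)) := by
    intro x
    rcases eq_or_ne x 0 with rfl | hx
    · simp [chi_zero]
    · have harg : a * (b * x⁻¹) + b * (b * x⁻¹)⁻¹ = x + (a * b) * x⁻¹ := by
        field_simp
        ring
      rw [harg, map_mul, chi_inv]
      ring
  calc ∑ x : ZMod p, χ p x * ψ p (a * x + b * x⁻¹)
      = ∑ x : ZMod p, χ p (b * x⁻¹) * ψ p (a * (b * x⁻¹) + b * (b * x⁻¹)⁻¹) := by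
        rw [← hre]
        rfl
    _ = ∑ x : ZMod p, χ p b * (χ p x * ψ p (x + (a * b) * x⁻¹)) :=
        Finset.sum_congr rfl fun x _ => hterm x
    _ = _ := by rw [← Finset.mul_sum]

lemma key (hp2 : p ≠ 2) (a b : ZMod p) (ha : a ≠ 0) :
    ‖∑ x : ZMod p, χ p x * ψ p (a * x + b * x⁻¹)‖ ≤ 2 * Real.sqrt p := by
  have hsqrt : 0 ≤ Real.sqrt p := Real.sqrt_nonneg p
  by_cases hb : b = 0
  · subst hb
    have hS : ∑ x : ZMod p, χ p x * ψ p (a * x + 0 * x⁻¹)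
        = χ p a * gaussSum (χ p) (ψ p) := by
      rw [← GS1 p a ha]
      refine Finset.sum_congr rfl fun x _ => ?_
      rw [zero_mul, add_zero]
    rw [hS, norm_mul, abs_chi p a ha, one_mul, abs_gauss p hp2]
    linarith
  · rw [stepB p a b hb, norm_mul, abs_chi p b hb, one_mul]
    set m := a * b with hm_def
    have hm : m ≠ 0 := mul_ne_zero ha hb
    by_cases hsq : IsSquare m
    · obtain ⟨α, hαm⟩ := hsq
      have hα : α ≠ 0 := by
        intro h0
        rw [h0, mul_zero] at hαm
        exact hm hαm
      have hS1 : ∑ x : ZMod p, χ p x * ψ p (x + m * x⁻¹)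
          = χ p α * ∑ x : ZMod p, χ p x * ψ p (α * (x + x⁻¹)) := by
        have hre := Equiv.sum_comp (Equiv.mulLeft₀ α hα)
          (fun x : ZMod p => χ p x * ψ p (x + m * x⁻¹))
        rw [← hre]
        have hterm : ∀ x : ZMod p,
            χ p (α * x) * ψ p (α * x + m * (α * x)⁻¹)
              = χ p α * (χ p x * ψ p (α * (x + x⁻¹))) := by
          intro x
          rcases eq_or_ne x 0 with rfl | hx
          · simp [chi_zero]
          · have harg : α * x + m * (α * x)⁻¹ = α * (x + x⁻¹) := by
              rw [hαm]
              field_simp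
            rw [harg, map_mul]
            ring
        calc ∑ x : ZMod p, (fun x : ZMod p => χ p x * ψ p (x + m * x⁻¹)) ((Equiv.mulLeft₀ α hα) x)
            = ∑ x : ZMod p, χ p (α * x) * ψ p (α * x + m * (α * x)⁻¹) := rfl
          _ = ∑ x : ZMod p, χ p α * (χ p x * ψ p (α * (x + x⁻¹))) :=
              Finset.sum_congr rfl fun x _ => hterm x
          _ = _ := by rw [← Finset.mul_sum]
      rw [hS1, T_eval p hp2 α hα, norm_mul, norm_mul, norm_mul, abs_chi p α hα,
        abs_gauss p hp2]
      simp only [one_mul]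
      have habs : ‖ψ p (2 * α) + ψ p (-(2 * α))‖ ≤ 2 := by
        calc ‖ψ p (2 * α) + ψ p (-(2 * α))‖
            ≤ ‖ψ p (2 * α)‖ + ‖ψ p (-(2 * α))‖ :=
              norm_add_le _ _
          _ = 2 := by rw [abs_psi, abs_psi]; norm_num
      calc Real.sqrt p * ‖ψ p (2 * α) + ψ p (-(2 * α))‖
          ≤ Real.sqrt p * 2 := by
            exact mul_le_mul_of_nonneg_left habs hsqrt
        _ = 2 * Real.sqrt p := by ring
    · have hχm : χ p m = -1 := by
        rw [chi_val, quadraticChar_neg_one_iff_not_isSquare.mpr hsq]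
        norm_num
      have h := stepB p 1 m hm
      simp only [one_mul] at h
      rw [hχm] at h
      have hS0 : ∑ x : ZMod p, χ p x * ψ p (x + m * x⁻¹) = 0 := by
        have h2 : (2 : ℂ) * ∑ x : ZMod p, χ p x * ψ p (x + m * x⁻¹) = 0 := by
          linear_combination h
        rcases mul_eq_zero.mp h2 with h3 | h3
        · exact absurd h3 two_ne_zero
        · exact h3
      rw [hS0, norm_zero]
      positivity

lemma psi_int (m : ℤ) : ψ p ((m : ZMod p)) = e ((m : ℂ) / p) := by
  have hp0 : (p : ℂ) ≠ 0 := Nat.cast_ne_zero.mpr (Fact.out : p.Prime).ne_zero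
  rw [ψ, AddChar.zmodChar_apply, ζ, ← Complex.exp_nat_mul, e]
  set v : ℕ := ((m : ZMod p)).val with hv_def
  have hv : (v : ℤ) = m % p := ZMod.val_intCast m
  have hmint : (m : ℤ) = v + p * (m / p) := by
    rw [hv]
    rw [Int.emod_def]
    ring
  have hm : (m : ℂ) = (v : ℂ) + p * ((m / p : ℤ) : ℂ) := by
    exact_mod_cast congrArg (fun z : ℤ => (z : ℂ)) hmint
  rw [hm, show 2 * Real.pi * Complex.I * (((v : ℂ) + p * ((m / p : ℤ) : ℂ)) / p)
      = (v : ℂ) * (2 * Real.pi * Complex.I / p) + ((m / p : ℤ) : ℂ) * (2 * Real.pi * Complex.I)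
      by field_simp,
    Complex.exp_add, Complex.exp_int_mul_two_pi_mul_I, mul_one]

lemma bridge (c d : ℤ) :
    ∑ x ∈ Finset.range p,
        (jacobiSym x p : ℂ) *
          e (((c * (x : ℤ) + d * ((((x : ZMod p)⁻¹).val : ℤ)) : ℤ) : ℂ) / (p : ℂ))
      = ∑ x : ZMod p, χ p x * ψ p ((c : ZMod p) * x + (d : ZMod p) * x⁻¹) := by
  refine Finset.sum_nbij' (i := fun n : ℕ => (n : ZMod p)) (j := fun x : ZMod p => x.val)
    ?_ ?_ ?_ ?_ ?_
  · intro a _; exact Finset.mem_univ _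
  · intro x _
    exact Finset.mem_range.mpr (ZMod.val_lt x)
  · intro a ha
    exact ZMod.val_natCast_of_lt (Finset.mem_range.mp ha)
  · intro x _
    simp [ZMod.natCast_val, ZMod.cast_id]
  · intro a _
    have h1 : (jacobiSym (a : ℤ) p : ℂ) = χ p ((a : ZMod p)) := by
      rw [← jacobiSym.legendreSym.to_jacobiSym, chi_val]
      norm_num [legendreSym]
    have h2 : ((c * (a : ℤ) + d * ((((a : ZMod p)⁻¹).val : ℤ)) : ℤ) : ZMod p)
        = (c : ZMod p) * (a : ZMod p) + (d : ZMod p) * ((a : ZMod p))⁻¹ := by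
      push_cast
      simp [ZMod.natCast_val, ZMod.cast_id]
    rw [h1, ← psi_int p, h2]

end Salie

theorem stmt4 (p : ℕ) (hp : p.Prime) (hodd : Odd p) (c d : ℤ)
    (hc : ¬ (p : ℤ) ∣ c) :
    ‖∑ x ∈ Finset.range p,
        (jacobiSym x p : ℂ) *
          e (((c * (x : ℤ) + d * ((((x : ZMod p)⁻¹).val : ℤ)) : ℤ) : ℂ) / (p : ℂ))‖
      ≤ 2 * Real.sqrt p := by
  haveI : Fact p.Prime := ⟨hp⟩
  have hp2 : p ≠ 2 := by
    rintro rfl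
    rw [Nat.odd_iff] at hodd
    norm_num at hodd
  have hc' : (c : ZMod p) ≠ 0 := by
    rw [Ne, ZMod.intCast_zmod_eq_zero_iff_dvd]
    exact hc
  rw [Salie.bridge p c d]
  exact Salie.key p hp2 _ _ hc'
end
end

section
/- Let p be an odd prime, and let r₁, r₂, r₃, h, n, v, b₁, b₂, b₃ be integers with p ∤ r₁, p ∤ r₂, p ∤ r₃, p ∤ h, and p | n. Then the sum T̃(p) = Σ_{x ∈ F_p^×} (x/p) e((r₁ h x − 4^{-1}(4v+b₁²+b₂²+b₃²) x^{-1})/p) · S(−r₂ x^{-1}, r₃ n; p) satisfies |T̃(p)| ≤ 2√p. -/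
/-- Kloosterman sum `S(m,n;c) = ∑_{y mod c, (y,c)=1} e((m y + n y⁻¹)/c)`. -/
noncomputable def K (m n : ℤ) (c : ℕ) : ℂ :=
  ∑ y ∈ Finset.range c,
    if Nat.Coprime y c then
      e (((m * (y : ℤ) + n * ((((y : ZMod c)⁻¹).val : ℤ)) : ℤ) : ℂ) / (c : ℂ))
    else 0

namespace Stmt5Aux

open Finset Complex

lemma e_add (s t : ℂ) : e (s + t) = e s * e t := by
  simp only [e, ← Complex.exp_add]; ring_nf

lemma e_zero : e 0 = 1 := by simp [e]

lemma e_int (z : ℤ) : e (z : ℂ) = 1 := by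
  simpa [e, mul_comm, mul_assoc, mul_left_comm] using Complex.exp_int_mul_two_pi_mul_I z

lemma e_abs (t : ℝ) : ‖e (t : ℂ)‖ = 1 := by
  rw [e, Complex.norm_exp]
  have : (2 * Real.pi * Complex.I * (t:ℂ)).re = 0 := by
    simp [Complex.mul_re]
  rw [this, Real.exp_zero]

variable (p : ℕ) [hp : Fact p.Prime]

lemma p_ne_zero : (p : ℂ) ≠ 0 := by
  exact_mod_cast hp.out.ne_zero

/-- additive character -/
noncomputable def ψ (t : ZMod p) : ℂ := e ((t.val : ℂ) / p)

lemma e_div_eq_of_modEq {z w : ℤ} (h : (z : ZMod p) = (w : ZMod p)) :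
    e ((z : ℂ) / p) = e ((w : ℂ) / p) := by
  have hd : (p : ℤ) ∣ z - w := by
    rwa [← ZMod.intCast_zmod_eq_zero_iff_dvd, Int.cast_sub, sub_eq_zero]
  obtain ⟨k, hk⟩ := hd
  have hz : (z : ℂ) = w + p * k := by
    have : z = w + p * k := by linarith [hk]
    exact_mod_cast congrArg (Int.cast : ℤ → ℂ) this
  rw [hz]
  have hp0 := p_ne_zero p
  have : ((w : ℂ) + p * k) / p = (w : ℂ) / p + (k : ℤ) := by
    field_simp
  rw [this, e_add, e_int, mul_one]

lemma psi_intCast (z : ℤ) : e ((z : ℂ) / p) = ψ p ((z : ZMod p)) := by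
  have h : ((z : ZMod p)) = ((((z : ZMod p).val : ℤ) : ZMod p)) := by
    simp [ZMod.natCast_zmod_val]
  have := e_div_eq_of_modEq p h
  rw [this, ψ]
  norm_num

lemma psi_natCast (z : ℕ) : e ((z : ℂ) / p) = ψ p ((z : ZMod p)) := by
  simpa using psi_intCast p (z : ℤ)

lemma psi_add (x y : ZMod p) : ψ p (x + y) = ψ p x * ψ p y := by
  have h1 : ψ p (x + y) = e (((x.val + y.val : ℕ) : ℂ) / p) := by
    rw [psi_natCast]; congr 1; push_cast [ZMod.natCast_zmod_val]; ring
  rw [h1]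
  have : ((x.val + y.val : ℕ) : ℂ) / p = (x.val : ℂ) / p + (y.val : ℂ) / p := by
    push_cast; ring
  rw [this, e_add]; rfl

lemma psi_zero : ψ p 0 = 1 := by
  simp [ψ, ZMod.val_zero, e_zero]

lemma psi_abs (x : ZMod p) : ‖ψ p x‖ = 1 := by
  have : ((x.val : ℂ) / p) = (((x.val : ℝ) / p : ℝ) : ℂ) := by push_cast; ring
  rw [ψ, this, e_abs]

lemma conj_psi (x : ZMod p) : (starRingEnd ℂ) (ψ p x) = ψ p (-x) := by
  have h1 : (starRingEnd ℂ) (ψ p x) * ψ p x = 1 := by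
    rw [mul_comm, Complex.mul_conj]
    norm_cast
    rw [← Complex.sq_norm, psi_abs]; norm_num
  have h2 : ψ p (-x) * ψ p x = 1 := by
    rw [← psi_add, neg_add_cancel, psi_zero]
  have hne : ψ p x ≠ 0 := by
    intro h; rw [h] at h2; simp at h2
  calc (starRingEnd ℂ) (ψ p x) = (starRingEnd ℂ) (ψ p x) * ψ p x * (ψ p x)⁻¹ := by
        field_simp
    _ = ψ p (-x) * ψ p x * (ψ p x)⁻¹ := by rw [h1, h2]
    _ = ψ p (-x) := by field_simp


lemma geom_zero (m : ℤ) (hm : ¬ (p:ℤ) ∣ m) :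
    ∑ y ∈ range p, e ((m : ℂ) / p) ^ y = 0 := by
  have hp0 : (p : ℂ) ≠ 0 := p_ne_zero p
  have hζp : e ((m:ℂ)/p) ^ p = 1 := by
    rw [e, ← Complex.exp_nat_mul]
    have : (p : ℂ) * (2 * Real.pi * Complex.I * ((m:ℂ)/p)) = (m : ℂ) * (2 * Real.pi * Complex.I) := by
      field_simp
    rw [this, Complex.exp_int_mul_two_pi_mul_I]
  have hζ1 : e ((m:ℂ)/p) ≠ 1 := by
    rw [e]
    intro hcon
    obtain ⟨k, hk⟩ := Complex.exp_eq_one_iff.mp hcon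
    have h2 : (2 * Real.pi * Complex.I : ℂ) ≠ 0 := by
      simp [Real.pi_ne_zero, Complex.I_ne_zero]
    have : (m : ℂ) / p = k := by
      field_simp at hk ⊢
      have := mul_left_cancel₀ h2 (by rw [hk]; ring_nf :
        (2 * Real.pi * Complex.I : ℂ) * (m:ℂ) = (2 * Real.pi * Complex.I) * (k * p))
      linear_combination this
    have hmkp : (m : ℂ) = k * p := by
      field_simp at this
      exact this.trans (mul_comm _ _)
    have : m = k * p := by exact_mod_cast hmkp
    exact hm ⟨k, by linarith⟩
  have := geom_sum_eq hζ1 p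
  rw [this, hζp, sub_self, zero_div]

lemma e_pow_eq (m : ℤ) (y : ℕ) : e ((m : ℂ)/p) ^ y = e (((m * y : ℤ) : ℂ) / p) := by
  rw [e, e, ← Complex.exp_nat_mul]
  congr 1
  push_cast
  ring

/-- sum of ψ over ZMod p equals sum over range p -/
lemma sum_zmod_eq_range (F : ZMod p → ℂ) :
    ∑ t : ZMod p, F t = ∑ y ∈ range p, F ((y : ℕ) : ZMod p) := by
  apply Finset.sum_nbij' (fun t => t.val) (fun y => ((y : ℕ) : ZMod p))
  · intro a _; exact mem_range.mpr (ZMod.val_lt a)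
  · intro a _; exact mem_univ _
  · intro a _; exact ZMod.natCast_zmod_val a
  · intro a ha; exact ZMod.val_cast_of_lt (mem_range.mp ha)
  · intro a _; rw [ZMod.natCast_zmod_val]

lemma sum_psi_mul (u : ZMod p) (hu : u ≠ 0) :
    ∑ t : ZMod p, ψ p (u * t) = 0 := by
  rw [sum_zmod_eq_range]
  have hpu : ¬ (p:ℤ) ∣ (u.val : ℤ) := by
    rw [Int.natCast_dvd_natCast]
    intro hd
    exact hu (by rwa [← ZMod.natCast_zmod_val u, ZMod.natCast_eq_zero_iff])
  have := geom_zero p (u.val : ℤ) hpu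
  rw [← this]
  apply Finset.sum_congr rfl
  intro y _
  rw [e_pow_eq, psi_intCast]
  congr 1
  push_cast [ZMod.natCast_zmod_val]
  ring

lemma sum_psi (u : ZMod p) (hu : u ≠ 0) :
    ∑ t : ZMod p, ψ p (u * t + (fun _ => (0:ZMod p)) t) = 0 := by
  simpa using sum_psi_mul p u hu


/-- quadratic character into ℂ -/
noncomputable def χ (x : ZMod p) : ℂ := ((quadraticChar (ZMod p) x : ℤ) : ℂ)

lemma ringChar_ne_two (hodd : p ≠ 2) : ringChar (ZMod p) ≠ 2 := by
  rw [ZMod.ringChar_zmod_n]; exact hodd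

lemma χ_zero : χ p 0 = 0 := by simp [χ]

lemma χ_mul (x y : ZMod p) : χ p (x * y) = χ p x * χ p y := by
  simp [χ, map_mul]

lemma χ_sq_eq_one {x : ZMod p} (hx : x ≠ 0) : χ p x * χ p x = 1 := by
  have h := quadraticChar_sq_one hx
  rw [χ, ← Int.cast_mul, ← pow_two]
  rw [h]; norm_num

lemma χ_inv (x : ZMod p) : χ p x⁻¹ = χ p x := by
  by_cases hx : x = 0
  · simp [hx]
  · have h1 : χ p x⁻¹ * χ p x = 1 := by
      rw [← χ_mul, inv_mul_cancel₀ hx]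
      simp [χ]
    have h2 := χ_sq_eq_one p hx
    have hne : χ p x ≠ 0 := by
      intro h; rw [h, mul_zero] at h2; exact one_ne_zero h2.symm
    exact mul_right_cancel₀ hne (h1.trans h2.symm)

lemma card_sqrts (hodd : p ≠ 2) (t : ZMod p) :
    ((Finset.univ.filter (fun z : ZMod p => z ^ 2 = t)).card : ℂ) = χ p t + 1 := by
  have := quadraticChar_card_sqrts (ringChar_ne_two p hodd) t
  rw [χ]
  have h2 : (({z : ZMod p | z ^ 2 = t}.toFinset.card : ℤ) : ℂ) =
      ((quadraticChar (ZMod p) t : ℤ) : ℂ) + 1 := by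
    rw [this]; push_cast; ring
  rw [← h2]
  norm_cast
  congr 1
  rw [Set.toFinset_setOf]

/-- fiber sum over squares, full version -/
lemma sum_sq (hodd : p ≠ 2) (f : ZMod p → ℂ) :
    ∑ y : ZMod p, f (y ^ 2) = ∑ t : ZMod p, (χ p t + 1) * f t := by
  rw [← Finset.sum_fiberwise (univ : Finset (ZMod p)) (fun y => y ^ 2) (fun y => f (y ^ 2))]
  apply Finset.sum_congr rfl
  intro t _
  have : ∀ y ∈ univ.filter (fun y : ZMod p => y ^ 2 = t), f (y ^ 2) = f t := by
    intro y hy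
    rw [(mem_filter.mp hy).2]
  rw [Finset.sum_congr rfl this, Finset.sum_const, nsmul_eq_mul, card_sqrts p hodd]

/-- punctured version -/
lemma sum_sq' (hodd : p ≠ 2) (f : ZMod p → ℂ) :
    ∑ y ∈ univ.erase (0 : ZMod p), f (y ^ 2) = ∑ t ∈ univ.erase (0 : ZMod p), (χ p t + 1) * f t := by
  have h0 : (0 : ZMod p) ∈ (univ : Finset (ZMod p)) := mem_univ _
  have h1 := Finset.sum_erase_eq_sub (f := fun y : ZMod p => f (y ^ 2)) (s := univ) h0
  have h2 := Finset.sum_erase_eq_sub (f := fun t : ZMod p => (χ p t + 1) * f t) (s := univ) h0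
  rw [h1, h2, sum_sq p hodd]
  simp [χ_zero]


lemma two_ne_zero' (hodd : p ≠ 2) : (2 : ZMod p) ≠ 0 := by
  have : ((2 : ℕ) : ZMod p) ≠ 0 := by
    rw [Ne, ZMod.natCast_eq_zero_iff]
    intro hd
    exact hodd ((Nat.prime_dvd_prime_iff_eq hp.out Nat.prime_two).mp hd)
  simpa using this

/-- card of quadratic fiber -/
lemma card_fiber (hodd : p ≠ 2) (a c s : ZMod p) (ha : a ≠ 0) (hc : c ≠ 0) :
    (((univ.erase (0 : ZMod p)).filter (fun y => a * y + c * y⁻¹ = s)).card : ℂ)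
      = χ p (s ^ 2 - 4 * a * c) + 1 := by
  have h2 : (2 : ZMod p) ≠ 0 := two_ne_zero' p hodd
  have h2a : 2 * a ≠ 0 := mul_ne_zero h2 ha
  rw [← card_sqrts p hodd (s ^ 2 - 4 * a * c)]
  congr 1
  have h4ac : 4 * a * c ≠ 0 := by
    have h4 : (4 : ZMod p) ≠ 0 := by
      have : (4 : ZMod p) = 2 * 2 := by norm_num
      rw [this]; exact mul_ne_zero h2 h2
    exact mul_ne_zero (mul_ne_zero h4 ha) hc
  apply Finset.card_bij' (fun y _ => 2 * a * y - s) (fun z _ => (s + z) * (2 * a)⁻¹)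
  · -- maps to
    intro y hy
    simp only [mem_filter, mem_erase, mem_univ, true_and, and_true] at hy ⊢
    obtain ⟨hy0, hys⟩ := hy
    have hy0 : y ≠ 0 := by
      intro hcon
      exact absurd hcon (by simpa using hy0)
    have hinv : y⁻¹ * y = 1 := inv_mul_cancel₀ hy0
    linear_combination (4 * a * y) * hys - (4 * a * c) * hinv
  · -- maps back
    intro z hz
    simp only [mem_filter, mem_erase, mem_univ, true_and, and_true] at hz ⊢
    have hsz : s + z ≠ 0 := by
      intro hcon
      have hzs : z = -s := by linear_combination hcon
      rw [hzs] at hz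
      have : (4 : ZMod p) * a * c = 0 := by linear_combination hz
      exact h4ac this
    constructor
    · intro hcon
      rcases mul_eq_zero.mp hcon with h | h
      · exact hsz h
      · exact inv_ne_zero h2a h
    · field_simp
      linear_combination hz
  · intro y hy
    simp only [mem_filter, mem_erase, mem_univ, true_and] at hy
    field_simp
    ring
  · intro z hz
    field_simp
    ring


/-- key substitution lemma: sum over y≠0 of f(a y + c y⁻¹) -/
lemma sum_fiber (hodd : p ≠ 2) (a c : ZMod p) (ha : a ≠ 0) (hc : c ≠ 0) (f : ZMod p → ℂ) :
    ∑ y ∈ univ.erase (0 : ZMod p), f (a * y + c * y⁻¹)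
      = ∑ s : ZMod p, (χ p (s ^ 2 - 4 * a * c) + 1) * f s := by
  rw [← Finset.sum_fiberwise (univ.erase (0 : ZMod p)) (fun y => a * y + c * y⁻¹)
      (fun y => f (a * y + c * y⁻¹))]
  apply Finset.sum_congr rfl
  intro s _
  have : ∀ y ∈ (univ.erase (0 : ZMod p)).filter (fun y => a * y + c * y⁻¹ = s),
      f (a * y + c * y⁻¹) = f s := by
    intro y hy
    rw [(mem_filter.mp hy).2]
  rw [Finset.sum_congr rfl this, Finset.sum_const, nsmul_eq_mul, card_fiber p hodd a c s ha hc]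

/-- the Gauss sum -/
noncomputable def g : ℂ := ∑ t : ZMod p, χ p t * ψ p t

lemma sum_chi_psi (u : ZMod p) (hu : u ≠ 0) :
    ∑ t : ZMod p, χ p t * ψ p (u * t) = χ p u * g p := by
  rw [g, Finset.mul_sum]
  apply Finset.sum_nbij' (fun t => u * t) (fun t => u⁻¹ * t)
  · intro t _; exact mem_univ _
  · intro t _; exact mem_univ _
  · intro t _; field_simp
  · intro t _; field_simp
  · intro t _
    rw [χ_mul]
    rw [show χ p u * (χ p u * χ p t * ψ p (u * t)) = (χ p u * χ p u) * (χ p t * ψ p (u * t)) from by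
      ring, χ_sq_eq_one p hu, one_mul]

lemma sum_psi_sq (hodd : p ≠ 2) (u : ZMod p) (hu : u ≠ 0) :
    ∑ s : ZMod p, ψ p (u * s ^ 2) = χ p u * g p := by
  rw [sum_sq p hodd (fun t => ψ p (u * t))]
  have : ∀ t : ZMod p, (χ p t + 1) * ψ p (u * t) = χ p t * ψ p (u * t) + ψ p (u * t) := by
    intro t; ring
  rw [Finset.sum_congr rfl (fun t _ => this t), Finset.sum_add_distrib,
    sum_chi_psi p u hu, sum_psi_mul p u hu, add_zero]

lemma g_eq (hodd : p ≠ 2) : g p = ∑ x : ZMod p, ψ p (x ^ 2) := by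
  have := sum_psi_sq p hodd 1 one_ne_zero
  simp only [one_mul] at this
  rw [this]
  have : χ p 1 = 1 := by simp [χ]
  rw [this, one_mul]

lemma g_abs (hodd : p ≠ 2) : ‖g p‖ = Real.sqrt p := by
  have h2 : (2 : ZMod p) ≠ 0 := two_ne_zero' p hodd
  have key : g p * (starRingEnd ℂ) (g p) = (p : ℂ) := by
    rw [g_eq p hodd, map_sum]
    rw [Finset.sum_mul_sum]
    have step1 : ∀ x y : ZMod p, ψ p (x ^ 2) * (starRingEnd ℂ) (ψ p (y ^ 2))
        = ψ p (x ^ 2 - y ^ 2) := by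
      intro x y
      rw [conj_psi, ← psi_add]
      congr 1; ring
    calc (∑ x : ZMod p, ∑ y : ZMod p, ψ p (x ^ 2) * (starRingEnd ℂ) (ψ p (y ^ 2)))
        = ∑ x : ZMod p, ∑ y : ZMod p, ψ p (x ^ 2 - y ^ 2) := by
          apply Finset.sum_congr rfl; intro x _
          apply Finset.sum_congr rfl; intro y _
          exact step1 x y
      _ = ∑ y : ZMod p, ∑ x : ZMod p, ψ p (x ^ 2 - y ^ 2) := Finset.sum_comm
      _ = ∑ y : ZMod p, ∑ u : ZMod p, ψ p (u ^ 2 + 2 * y * u) := by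
          apply Finset.sum_congr rfl; intro y _
          apply Finset.sum_nbij' (fun x => x - y) (fun u => u + y)
          · intro x _; exact mem_univ _
          · intro x _; exact mem_univ _
          · intro x _; ring
          · intro x _; ring
          · intro x _; congr 1; ring
      _ = ∑ u : ZMod p, ∑ y : ZMod p, ψ p (u ^ 2 + 2 * y * u) := Finset.sum_comm
      _ = ∑ u : ZMod p, ψ p (u ^ 2) * ∑ y : ZMod p, ψ p ((2 * u) * y) := by
          apply Finset.sum_congr rfl; intro u _
          rw [Finset.mul_sum]
          apply Finset.sum_congr rfl; intro y _
          rw [← psi_add]; congr 1; ring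
      _ = (p : ℂ) := by
          rw [Finset.sum_eq_single (0 : ZMod p)]
          · simp only [pow_two, zero_mul, mul_zero, psi_zero, one_mul]
            have : ∀ y : ZMod p, ψ p ((2 * (0:ZMod p)) * y) = 1 := by
              intro y; rw [mul_zero, zero_mul, psi_zero]
            rw [Finset.sum_const, Finset.card_univ, ZMod.card]
            simp
          · intro u _ hu
            rw [sum_psi_mul p (2 * u) (mul_ne_zero h2 hu), mul_zero]
          · intro hcon
            exact absurd (mem_univ _) hcon
  have habs : ‖g p‖ ^ 2 = p := by
    have h1 : ((Complex.normSq (g p) : ℝ) : ℂ) = (p : ℂ) := by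
      rw [← Complex.mul_conj, key]
    have h2' : (Complex.normSq (g p) : ℝ) = (p : ℝ) := by exact_mod_cast h1
    rw [Complex.sq_norm, h2']
  rw [← habs]
  rw [Real.sqrt_sq (norm_nonneg _)]


lemma χ_abs {x : ZMod p} (hx : x ≠ 0) : ‖χ p x‖ = 1 := by
  have h := χ_sq_eq_one p hx
  have h2 : ‖χ p x‖ * ‖χ p x‖ = 1 := by
    rw [← norm_mul, h, norm_one]
  rcases mul_self_eq_one_iff.mp h2 with h' | h'
  · exact h'
  · exfalso
    have := norm_nonneg (χ p x)
    rw [h'] at this; linarith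

lemma kloos_eq (α β : ZMod p) (hα : α ≠ 0) :
    ∑ x ∈ univ.erase (0 : ZMod p), ψ p (α * x + β * x⁻¹)
      = ∑ x ∈ univ.erase (0 : ZMod p), ψ p (x + (α * β) * x⁻¹) := by
  apply Finset.sum_nbij' (fun v => α * v) (fun x => α⁻¹ * x)
  · intro v hv
    simp only [mem_erase, mem_univ, and_true] at hv ⊢
    exact mul_ne_zero hα hv
  · intro x hx
    simp only [mem_erase, mem_univ, and_true] at hx ⊢
    exact mul_ne_zero (inv_ne_zero hα) hx
  · intro v _; field_simp
  · intro x _; field_simp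
  · intro v hv
    simp only [mem_erase, mem_univ, and_true] at hv
    congr 1
    rw [mul_inv]
    field_simp

theorem salie (hodd : p ≠ 2) (a b : ZMod p) (ha : a ≠ 0) :
    ‖∑ x ∈ univ.erase (0 : ZMod p), χ p x * ψ p (a * x + b * x⁻¹)‖
      ≤ 2 * Real.sqrt p := by
  have h2 : (2 : ZMod p) ≠ 0 := two_ne_zero' p hodd
  have hai : a⁻¹ ≠ 0 := inv_ne_zero ha
  have hsqrtp : (0:ℝ) ≤ Real.sqrt p := Real.sqrt_nonneg p
  by_cases hb : b = 0
  · -- Gauss sum case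
    subst hb
    have heq : ∀ x ∈ univ.erase (0 : ZMod p), χ p x * ψ p (a * x + 0 * x⁻¹) = χ p x * ψ p (a * x) := by
      intro x _; rw [zero_mul, add_zero]
    rw [Finset.sum_congr rfl heq]
    rw [Finset.sum_erase (f := fun x : ZMod p => χ p x * ψ p (a * x)) _ (by simp [χ_zero])]
    rw [sum_chi_psi p a ha, norm_mul, χ_abs p ha, one_mul, g_abs p hodd]
    nlinarith
  · by_cases hsq : IsSquare (a * b)
    · obtain ⟨A, hA⟩ := hsq
      have hA2 : a * b = A ^ 2 := by rw [hA]; ring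
      have hA0 : A ≠ 0 := by
        intro hcon
        rw [hcon] at hA2
        have : a * b = 0 := by rw [hA2]; ring
        rcases mul_eq_zero.mp this with h' | h'
        · exact ha h'
        · exact hb h'
      have hbeq : b = a⁻¹ * A ^ 2 := by
        field_simp
        linear_combination hA2
      set B : ZMod p := 2 * a * A with hB
      have hB0 : B ≠ 0 := mul_ne_zero (mul_ne_zero h2 ha) hA0
      set U := ∑ x ∈ univ.erase (0 : ZMod p), χ p x * ψ p (a * x + b * x⁻¹) with hU
      set k := ∑ x ∈ univ.erase (0 : ZMod p), ψ p (a * x + b * x⁻¹) with hk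
      -- Step 1 : U + k = ∑_{y≠0} ψ (a y² + b (y²)⁻¹)
      have step1 : U + k = ∑ y ∈ univ.erase (0 : ZMod p), ψ p (a * y ^ 2 + b * (y ^ 2)⁻¹) := by
        rw [hU, hk, ← Finset.sum_add_distrib]
        rw [sum_sq' p hodd (fun t => ψ p (a * t + b * t⁻¹))]
        apply Finset.sum_congr rfl
        intro t _
        ring
      -- Step 2 : RHS = ψ(2A) * ∑_{y≠0} ψ (a⁻¹ (a y − A y⁻¹)²)
      have step2 : ∑ y ∈ univ.erase (0 : ZMod p), ψ p (a * y ^ 2 + b * (y ^ 2)⁻¹)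
          = ψ p (2 * A) * ∑ y ∈ univ.erase (0 : ZMod p), ψ p (a⁻¹ * (a * y + (-A) * y⁻¹) ^ 2) := by
        rw [Finset.mul_sum]
        apply Finset.sum_congr rfl
        intro y hy
        have hy0 : y ≠ 0 := by
          simpa only [mem_erase, mem_univ, and_true] using hy
        rw [← psi_add]
        congr 1
        rw [hbeq]
        field_simp
        ring
      -- Step 3+4 : inner sum via fibers
      have step3 : ∑ y ∈ univ.erase (0 : ZMod p), ψ p (a⁻¹ * (a * y + (-A) * y⁻¹) ^ 2)
          = ∑ s : ZMod p, (χ p (s ^ 2 + 4 * a * A) + 1) * ψ p (a⁻¹ * s ^ 2) := by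
        rw [sum_fiber p hodd a (-A) ha (neg_ne_zero.mpr hA0) (fun s => ψ p (a⁻¹ * s ^ 2))]
        apply Finset.sum_congr rfl
        intro s _
        congr 2
        ring
      -- Step 4 : split off the pure Gauss part
      have hsplit : ∑ s : ZMod p, (χ p (s ^ 2 + 4 * a * A) + 1) * ψ p (a⁻¹ * s ^ 2)
          = (∑ s : ZMod p, χ p (s ^ 2 + 4 * a * A) * ψ p (a⁻¹ * s ^ 2)) + χ p a⁻¹ * g p := by
        rw [← sum_psi_sq p hodd a⁻¹ hai, ← Finset.sum_add_distrib]
        apply Finset.sum_congr rfl; intro s _; ring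
      -- Step 5 : R = Q + R₁
      have hR : ∑ s : ZMod p, χ p (s ^ 2 + 4 * a * A) * ψ p (a⁻¹ * s ^ 2)
          = (∑ t : ZMod p, χ p t * χ p (t + 4 * a * A) * ψ p (a⁻¹ * t))
            + ∑ t : ZMod p, χ p (t + 4 * a * A) * ψ p (a⁻¹ * t) := by
        rw [sum_sq p hodd (fun t => χ p (t + 4 * a * A) * ψ p (a⁻¹ * t)), ← Finset.sum_add_distrib]
        apply Finset.sum_congr rfl; intro t _; ring
      -- Step 6 : R₁
      have hR1 : ∑ t : ZMod p, χ p (t + 4 * a * A) * ψ p (a⁻¹ * t)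
          = ψ p (-(4 * A)) * (χ p a⁻¹ * g p) := by
        have hre : ∑ t : ZMod p, χ p (t + 4 * a * A) * ψ p (a⁻¹ * t)
            = ∑ u : ZMod p, χ p u * ψ p (a⁻¹ * u) * ψ p (-(4 * A)) := by
          apply Fintype.sum_equiv (Equiv.addRight (4 * a * A))
            (fun t => χ p (t + 4 * a * A) * ψ p (a⁻¹ * t))
            (fun u => χ p u * ψ p (a⁻¹ * u) * ψ p (-(4 * A)))
          intro t
          simp only [Equiv.coe_addRight]
          have harg : a⁻¹ * t = a⁻¹ * (t + 4 * a * A) + -(4 * A) := by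
            field_simp; ring
          rw [harg, psi_add]
          ring
        rw [hre, ← Finset.sum_mul, sum_chi_psi p a⁻¹ hai]
        ring
      -- Step 7 : Q
      have hQ : ∑ t : ZMod p, χ p t * χ p (t + 4 * a * A) * ψ p (a⁻¹ * t)
          = ψ p (-(2 * A)) * ∑ u : ZMod p, χ p (u ^ 2 - B ^ 2) * ψ p (a⁻¹ * u) := by
        rw [Finset.mul_sum]
        apply Fintype.sum_equiv (Equiv.addRight B)
          (fun t => χ p t * χ p (t + 4 * a * A) * ψ p (a⁻¹ * t))
          (fun u => ψ p (-(2 * A)) * (χ p (u ^ 2 - B ^ 2) * ψ p (a⁻¹ * u)))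
        intro t
        simp only [Equiv.coe_addRight]
        have h2B : (t + B) ^ 2 - B ^ 2 = t * (t + 4 * a * A) := by rw [hB]; ring
        rw [h2B, χ_mul]
        have hψ : ψ p (a⁻¹ * t) = ψ p (-(2 * A)) * ψ p (a⁻¹ * (t + B)) := by
          rw [← psi_add]
          congr 1
          rw [hB]
          field_simp
          ring
        rw [hψ]
        ring
      -- Step 8-12 : M = k
      have hM : ∑ u : ZMod p, χ p (u ^ 2 - B ^ 2) * ψ p (a⁻¹ * u) = k := by
        have hχ4 : χ p 4 = 1 := by
          have : (4 : ZMod p) = 2 * 2 := by norm_num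
          rw [this, χ_mul, χ_sq_eq_one p h2]
        have hMadd : ∑ u : ZMod p, χ p (u ^ 2 - B ^ 2) * ψ p (a⁻¹ * u)
            = ∑ u : ZMod p, (χ p (u ^ 2 - B ^ 2) + 1) * ψ p (a⁻¹ * u) := by
          have hd : ∑ u : ZMod p, (χ p (u ^ 2 - B ^ 2) + 1) * ψ p (a⁻¹ * u)
              = (∑ u : ZMod p, χ p (u ^ 2 - B ^ 2) * ψ p (a⁻¹ * u))
                + ∑ u : ZMod p, ψ p (a⁻¹ * u) := by
            rw [← Finset.sum_add_distrib]
            apply Finset.sum_congr rfl; intro u _; ring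
          rw [hd, sum_psi_mul p a⁻¹ hai, add_zero]
        rw [hMadd]
        have hre2 : ∑ u : ZMod p, (χ p (u ^ 2 - B ^ 2) + 1) * ψ p (a⁻¹ * u)
            = ∑ s : ZMod p, (χ p (s ^ 2 - 4 * 1 * B ^ 2) + 1) * ψ p ((a⁻¹ * 2⁻¹) * s) := by
          apply Fintype.sum_equiv (Equiv.mulLeft₀ (2 : ZMod p) h2)
            (fun u => (χ p (u ^ 2 - B ^ 2) + 1) * ψ p (a⁻¹ * u))
            (fun s => (χ p (s ^ 2 - 4 * 1 * B ^ 2) + 1) * ψ p (a⁻¹ * 2⁻¹ * s))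
          intro u
          simp only [Equiv.mulLeft₀_apply]
          have harg : (2 * u) ^ 2 - 4 * 1 * B ^ 2 = 4 * (u ^ 2 - B ^ 2) := by ring
          rw [harg, χ_mul, hχ4, one_mul]
          have harg2 : a⁻¹ * 2⁻¹ * (2 * u) = a⁻¹ * u := by field_simp
          rw [harg2]
        rw [hre2, ← sum_fiber p hodd 1 (B ^ 2) one_ne_zero (pow_ne_zero 2 hB0)
          (fun s => ψ p (a⁻¹ * 2⁻¹ * s))]
        have hre3 : ∑ v ∈ univ.erase (0 : ZMod p), ψ p (a⁻¹ * 2⁻¹ * (1 * v + B ^ 2 * v⁻¹))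
            = ∑ v ∈ univ.erase (0 : ZMod p),
                ψ p ((a⁻¹ * 2⁻¹) * v + (a⁻¹ * 2⁻¹ * B ^ 2) * v⁻¹) := by
          apply Finset.sum_congr rfl; intro v _
          congr 1; ring
        rw [hre3, kloos_eq p _ _ (mul_ne_zero hai (inv_ne_zero h2))]
        have hαβ : (a⁻¹ * 2⁻¹) * (a⁻¹ * 2⁻¹ * B ^ 2) = A ^ 2 := by
          rw [hB]
          field_simp
        rw [hαβ, hk, kloos_eq p a b ha, hA2]
      -- assemble
      have hpp : ψ p (2 * A) * ψ p (-(2 * A)) = 1 := by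
        rw [← psi_add]
        simp [psi_zero]
      have hpp2 : ψ p (2 * A) * ψ p (-(4 * A)) = ψ p (-(2 * A)) := by
        rw [← psi_add]
        congr 1; ring
      have final : U = χ p a⁻¹ * g p * (ψ p (2 * A) + ψ p (-(2 * A))) := by
        have e1 : U + k = ψ p (2 * A) * (((ψ p (-(2 * A)) * ∑ u : ZMod p, χ p (u ^ 2 - B ^ 2) * ψ p (a⁻¹ * u))
              + ψ p (-(4 * A)) * (χ p a⁻¹ * g p)) + χ p a⁻¹ * g p) := by
          rw [step1, step2, step3, hsplit, hR, hQ, hR1]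
        rw [hM] at e1
        linear_combination e1 + k * hpp + (χ p a⁻¹ * g p) * hpp2
      rw [final]
      have h3 : ‖ψ p (2 * A) + ψ p (-(2 * A))‖ ≤ 2 := by
        calc ‖ψ p (2 * A) + ψ p (-(2 * A))‖
            ≤ ‖ψ p (2 * A)‖ + ‖ψ p (-(2 * A))‖ := norm_add_le _ _
          _ = 2 := by rw [psi_abs, psi_abs]; norm_num
      calc ‖χ p a⁻¹ * g p * (ψ p (2 * A) + ψ p (-(2 * A)))‖
          = ‖χ p a⁻¹‖ * ‖g p‖
              * ‖ψ p (2 * A) + ψ p (-(2 * A))‖ := by rw [norm_mul, norm_mul]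
        _ ≤ 1 * Real.sqrt p * 2 := by
            rw [χ_abs p hai, g_abs p hodd, one_mul]
            exact mul_le_mul_of_nonneg_left h3 hsqrtp
        _ = 2 * Real.sqrt p := by ring
    · -- nonsquare case : sum is zero
      have hab0 : a * b ≠ 0 := mul_ne_zero ha hb
      have hχab : χ p (a * b) = -1 := by
        rw [χ]
        have := quadraticChar_neg_one_iff_not_isSquare.mpr hsq
        rw [this]; norm_num
      set U := ∑ x ∈ univ.erase (0 : ZMod p), χ p x * ψ p (a * x + b * x⁻¹) with hU
      have hUeq : U = -U := by
        conv_lhs => rw [hU]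
        have : ∑ x ∈ univ.erase (0 : ZMod p), χ p x * ψ p (a * x + b * x⁻¹)
            = ∑ x ∈ univ.erase (0 : ZMod p), -(χ p x * ψ p (a * x + b * x⁻¹)) := by
          apply Finset.sum_nbij' (fun x => b * a⁻¹ * x⁻¹) (fun x => b * a⁻¹ * x⁻¹)
          · intro x hx
            simp only [mem_erase, mem_univ, and_true] at hx ⊢
            exact mul_ne_zero (mul_ne_zero hb hai) (inv_ne_zero hx)
          · intro x hx
            simp only [mem_erase, mem_univ, and_true] at hx ⊢
            exact mul_ne_zero (mul_ne_zero hb hai) (inv_ne_zero hx)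
          · intro x hx
            simp only [mem_erase, mem_univ, and_true] at hx
            field_simp
          · intro x hx
            simp only [mem_erase, mem_univ, and_true] at hx
            field_simp
          · intro x hx
            simp only [mem_erase, mem_univ, and_true] at hx
            have harg : a * (b * a⁻¹ * x⁻¹) + b * (b * a⁻¹ * x⁻¹)⁻¹ = a * x + b * x⁻¹ := by
              rw [mul_inv, mul_inv, inv_inv]
              field_simp
              ring
            have hχx : χ p (b * a⁻¹ * x⁻¹) = -χ p x := by
              rw [χ_mul, χ_mul, χ_inv, χ_inv]
              have hba : χ p b * χ p a = -1 := by
                rw [← hχab, ← χ_mul]; ring_nf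
              calc χ p b * χ p a * χ p x = (χ p b * χ p a) * χ p x := by ring
                _ = -χ p x := by rw [hba]; ring
            rw [harg, hχx]
            ring
        rw [this, Finset.sum_neg_distrib]
      have hU0 : U = 0 := by
        have hsum : U + U = 0 := by nth_rewrite 1 [hUeq]; ring
        exact add_self_eq_zero.mp hsum
      rw [hU0]
      simp


lemma K_eval (m n' : ℤ) (hm : ¬ (p:ℤ) ∣ m) (hn : (p:ℤ) ∣ n') : K m n' p = -1 := by
  have hp1 : 1 < p := hp.out.one_lt
  have hp0 : (p:ℂ) ≠ 0 := p_ne_zero p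
  obtain ⟨n₀, hn₀⟩ := hn
  have hterm : ∀ y ∈ Finset.range p,
      (if Nat.Coprime y p then
        e (((m * (y : ℤ) + n' * ((((y : ZMod p)⁻¹).val : ℤ)) : ℤ) : ℂ) / (p : ℂ))
      else 0)
      = (if Nat.Coprime y p then e ((m:ℂ)/p) ^ y else 0) := by
    intro y _
    by_cases hc : Nat.Coprime y p
    · rw [if_pos hc, if_pos hc]
      set w : ℤ := (((y : ZMod p)⁻¹).val : ℤ) with hw
      have hsplit : ((m * (y:ℤ) + n' * w : ℤ) : ℂ) / p
          = ((m * (y:ℤ) : ℤ) : ℂ)/p + ((n₀ * w : ℤ) : ℂ) := by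
        push_cast [hn₀]
        field_simp
      rw [hsplit, e_add, e_int, mul_one, e_pow_eq]
    · rw [if_neg hc, if_neg hc]
  rw [K, Finset.sum_congr rfl hterm]
  have hterm2 : ∀ y ∈ Finset.range p,
      (if Nat.Coprime y p then e ((m:ℂ)/p) ^ y else 0)
      = e ((m:ℂ)/p) ^ y - (if y = 0 then 1 else 0) := by
    intro y hymem
    by_cases hy : y = 0
    · subst hy
      have hnc : ¬ Nat.Coprime 0 p := by
        rw [Nat.coprime_zero_left]
        omega
      rw [if_neg hnc, if_pos rfl]
      simp
    · have hcop : Nat.Coprime y p := by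
        rw [Nat.coprime_comm]
        exact (Nat.Prime.coprime_iff_not_dvd hp.out).mpr
          (fun hd => hy (Nat.eq_zero_of_dvd_of_lt hd (Finset.mem_range.mp hymem)))
      rw [if_pos hcop, if_neg hy]
      ring
  rw [Finset.sum_congr rfl hterm2, Finset.sum_sub_distrib, geom_zero p m hm,
    Finset.sum_ite_eq' (Finset.range p) 0 (fun _ => (1:ℂ))]
  have h0mem : (0 : ℕ) ∈ Finset.range p := Finset.mem_range.mpr (by omega)
  rw [if_pos h0mem]
  ring

end Stmt5Aux

open Finset Stmt5Aux

theorem stmt5 (p : ℕ) (hp : p.Prime) (hodd : Odd p)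
    (r₁ r₂ r₃ h n v b₁ b₂ b₃ : ℤ)
    (hr₁ : ¬ (p : ℤ) ∣ r₁) (hr₂ : ¬ (p : ℤ) ∣ r₂) (hr₃ : ¬ (p : ℤ) ∣ r₃)
    (hh : ¬ (p : ℤ) ∣ h) (hn : (p : ℤ) ∣ n) :
    ‖(∑ x ∈ Finset.range p,
        (jacobiSym x p : ℂ) *
          e (((r₁ * h * (x : ℤ) -
                (((4 : ZMod p)⁻¹).val : ℤ) * (4 * v + b₁ ^ 2 + b₂ ^ 2 + b₃ ^ 2) *
                  ((((x : ZMod p)⁻¹).val : ℤ)) : ℤ) : ℂ) / (p : ℂ)) *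
          K (-(r₂ * ((((x : ZMod p)⁻¹).val : ℤ)))) (r₃ * n) p)‖
      ≤ 2 * Real.sqrt p := by
  haveI : Fact p.Prime := ⟨hp⟩
  have hp2 : p ≠ 2 := by
    rintro rfl
    rw [Nat.odd_iff] at hodd
    norm_num at hodd
  have hp1 : 1 < p := hp.one_lt
  have hpP : Prime (p : ℤ) := Nat.prime_iff_prime_int.mp hp
  set a : ZMod p := ((r₁ * h : ℤ) : ZMod p) with ha_def
  set bb : ZMod p :=
    -(((((4 : ZMod p)⁻¹).val : ℤ) * (4 * v + b₁ ^ 2 + b₂ ^ 2 + b₃ ^ 2) : ℤ) : ZMod p) with hbb_def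
  have ha : a ≠ 0 := by
    rw [ha_def, Ne, ZMod.intCast_zmod_eq_zero_iff_dvd]
    intro hd
    rcases hpP.dvd_mul.mp hd with h' | h'
    · exact hr₁ h'
    · exact hh h'
  have hsum : (∑ x ∈ Finset.range p,
        (jacobiSym x p : ℂ) *
          e (((r₁ * h * (x : ℤ) -
                (((4 : ZMod p)⁻¹).val : ℤ) * (4 * v + b₁ ^ 2 + b₂ ^ 2 + b₃ ^ 2) *
                  ((((x : ZMod p)⁻¹).val : ℤ)) : ℤ) : ℂ) / (p : ℂ)) *
          K (-(r₂ * ((((x : ZMod p)⁻¹).val : ℤ)))) (r₃ * n) p)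
      = - ∑ z ∈ univ.erase (0 : ZMod p), χ p z * ψ p (a * z + bb * z⁻¹) := by
    have h0 : (0:ℕ) ∈ Finset.range p := mem_range.mpr (by omega)
    rw [← Finset.add_sum_erase _ _ h0]
    have hj0 : (jacobiSym ((0:ℕ):ℤ) p : ℂ) = 0 := by
      norm_num [jacobiSym.zero_left hp1]
    rw [hj0, zero_mul, zero_mul, zero_add, ← Finset.sum_neg_distrib]
    apply Finset.sum_nbij' (fun x => ((x:ℕ) : ZMod p)) (fun z => z.val)
    · intro x hx
      simp only [mem_erase, mem_range, mem_univ, and_true] at hx ⊢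
      rw [Ne, ZMod.natCast_eq_zero_iff]
      exact fun hd => hx.1 (Nat.eq_zero_of_dvd_of_lt hd hx.2)
    · intro z hz
      simp only [mem_erase, mem_univ, and_true, mem_range] at hz ⊢
      exact ⟨fun hv => hz ((ZMod.val_eq_zero z).mp hv), ZMod.val_lt z⟩
    · intro x hx
      simp only [mem_erase, mem_range] at hx
      exact ZMod.val_cast_of_lt hx.2
    · intro z _
      exact ZMod.natCast_zmod_val z
    · intro x hx
      simp only [mem_erase, mem_range] at hx
      have hz : ((x:ℕ) : ZMod p) ≠ 0 := by
        rw [Ne, ZMod.natCast_eq_zero_iff]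
        exact fun hd => hx.1 (Nat.eq_zero_of_dvd_of_lt hd hx.2)
      -- K factor
      have hw0 : ¬ (p:ℤ) ∣ ((((x : ZMod p)⁻¹).val : ℤ)) := by
        rw [Int.natCast_dvd_natCast]
        intro hd
        have : ((x : ZMod p)⁻¹).val = 0 := Nat.eq_zero_of_dvd_of_lt hd (ZMod.val_lt _)
        exact hz (inv_eq_zero.mp ((ZMod.val_eq_zero _).mp this))
      have hm : ¬ (p:ℤ) ∣ -(r₂ * ((((x : ZMod p)⁻¹).val : ℤ))) := by
        rw [Int.dvd_neg]
        intro hd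
        rcases hpP.dvd_mul.mp hd with h' | h'
        · exact hr₂ h'
        · exact hw0 h'
      rw [K_eval p _ _ hm (Dvd.dvd.mul_left hn r₃)]
      -- jacobi factor
      have hjac : (jacobiSym ((x:ℕ):ℤ) p : ℂ) = χ p ((x:ℕ) : ZMod p) := by
        rw [← jacobiSym.legendreSym.to_jacobiSym]
        have : legendreSym p ((x:ℕ):ℤ) = quadraticChar (ZMod p) (((x:ℕ):ℤ) : ZMod p) := rfl
        rw [this, χ]
        norm_num
      rw [hjac]
      -- exponential factor
      rw [psi_intCast p]
      have harg : (((r₁ * h * (x : ℤ) -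
            (((4 : ZMod p)⁻¹).val : ℤ) * (4 * v + b₁ ^ 2 + b₂ ^ 2 + b₃ ^ 2) *
              ((((x : ZMod p)⁻¹).val : ℤ)) : ℤ)) : ZMod p)
          = a * ((x:ℕ) : ZMod p) + bb * ((x:ℕ) : ZMod p)⁻¹ := by
        rw [ha_def, hbb_def]
        push_cast
        simp only [ZMod.natCast_zmod_val]
        ring
      rw [harg]
      ring
  rw [hsum, norm_neg]
  exact Stmt5Aux.salie p hp2 a bb ha
end

section
/- Let Q ≥ 1 and let F be a continuous 1-periodic function on ℝ. Then ∫_0^1 F(α) dα = Σ_{q ≤ Q} Σ*_{a=1}^{q} ∫_{M(a,q)} F(a/q + β) dβ, where the star restricts to gcd(a,q)=1 and M(a,q) = [−1/(q(q+q')), 1/(q(q+q''))] with a'/q', a/q, a''/q'' consecutive Farey fractions of order Q (so Q < q+q', q+q'' ≤ q+Q, a q' ≡ 1 (mod q), a q'' ≡ −1 (mod q)). -/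
open Finset

private lemma window_eq' {Q q x y : ℕ} (hq : 0 < q) (hx1 : Q < q + x) (hx2 : x ≤ Q)
    (hy1 : Q < q + y) (hy2 : y ≤ Q) (hdvd : (q:ℤ) ∣ (x:ℤ) - y) : x = y := by
  obtain ⟨k, hk⟩ := hdvd
  have h1 : (x:ℤ) - y < q := by omega
  have h2 : -(q:ℤ) < (x:ℤ) - y := by omega
  rw [hk] at h1 h2
  have hq' : (0:ℤ) < q := by exact_mod_cast hq
  have hk0 : k = 0 := by nlinarith
  rw [hk0, mul_zero] at hk
  omega

private lemma endpoint_eq' {a q b r : ℕ} (hq : 0 < q) (hr : 0 < r) (h : b * q = a * r + 1) :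
    (a:ℝ)/q + 1/((q:ℝ)*((q:ℝ)+(r:ℝ))) = (b:ℝ)/r - 1/((r:ℝ)*((r:ℝ)+(q:ℝ))) := by
  have hq0 : (q:ℝ) ≠ 0 := Nat.cast_ne_zero.2 hq.ne'
  have hr0 : (r:ℝ) ≠ 0 := Nat.cast_ne_zero.2 hr.ne'
  have hqr : (q:ℝ) + r ≠ 0 := by positivity
  have hrq : (r:ℝ) + q ≠ 0 := by positivity
  have key : (b:ℝ)*q = (a:ℝ)*r + 1 := by exact_mod_cast h
  field_simp
  linear_combination (-((q:ℝ)+(r:ℝ))^2) * key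

theorem stmt19 (Q : ℕ) (hQ : 1 ≤ Q) (F : ℝ → ℂ) (hF : Continuous F)
    (hper : ∀ x : ℝ, F (x + 1) = F x)
    (q' q'' : ℕ → ℕ → ℕ)
    (hq' : ∀ a q : ℕ, 1 ≤ q → q ≤ Q → Nat.Coprime a q →
      Q < q + q' a q ∧ q + q' a q ≤ q + Q ∧ a * q' a q ≡ 1 [MOD q])
    (hq'' : ∀ a q : ℕ, 1 ≤ q → q ≤ Q → Nat.Coprime a q →
      Q < q + q'' a q ∧ q + q'' a q ≤ q + Q ∧ q ∣ a * q'' a q + 1) :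
    ∫ α in (0:ℝ)..1, F α =
      ∑ q ∈ Finset.Icc 1 Q,
        ∑ a ∈ (Finset.Icc 1 q).filter (fun a => Nat.Coprime a q),
          ∫ β in (-(1 / ((q : ℝ) * ((q : ℝ) + (q' a q : ℝ)))))..(
              1 / ((q : ℝ) * ((q : ℝ) + (q'' a q : ℝ)))),
            F ((a : ℝ) / (q : ℝ) + β) := by
  classical
  -- antiderivative
  set Φ : ℝ → ℂ := fun x => ∫ t in (0:ℝ)..x, F t with hΦdef
  have hint : ∀ a b : ℝ, IntervalIntegrable F MeasureTheory.volume a b :=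
    fun a b => hF.intervalIntegrable a b
  have hsub : ∀ x y : ℝ, Φ y - Φ x = ∫ t in x..y, F t := fun x y =>
    intervalIntegral.integral_interval_sub_left (hint 0 y) (hint 0 x)
  -- the index set, as pairs (q, a)
  set S : Finset (ℕ × ℕ) :=
    (Finset.Icc 1 Q ×ˢ Finset.Icc 1 Q).filter
      (fun p => p.2 ≤ p.1 ∧ Nat.Coprime p.2 p.1) with hSdef
  have hmem : ∀ p : ℕ × ℕ, p ∈ S ↔
      p.1 ∈ Finset.Icc 1 Q ∧ p.2 ∈ (Finset.Icc 1 p.1).filter (fun a => Nat.Coprime a p.1) := by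
    intro p
    simp only [hSdef, Finset.mem_filter, Finset.mem_product, Finset.mem_Icc]
    constructor
    · rintro ⟨⟨h1, h2⟩, h3, h4⟩; exact ⟨h1, ⟨h2.1, h3⟩, h4⟩
    · rintro ⟨h1, ⟨h2, h3⟩, h4⟩; exact ⟨⟨h1, h2, h3.trans h1.2⟩, h3, h4⟩
  have hmem' : ∀ p : ℕ × ℕ, p ∈ S ↔
      1 ≤ p.1 ∧ p.1 ≤ Q ∧ 1 ≤ p.2 ∧ p.2 ≤ p.1 ∧ Nat.Coprime p.2 p.1 := by
    intro p
    rw [hmem]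
    simp only [Finset.mem_filter, Finset.mem_Icc]
    tauto
  -- endpoints of the arcs
  set Rv : ℕ × ℕ → ℝ :=
    fun p => (p.2:ℝ)/(p.1:ℝ) + 1/((p.1:ℝ)*((p.1:ℝ)+(q'' p.2 p.1 : ℝ))) with hRvdef
  set Lv : ℕ × ℕ → ℝ :=
    fun p => (p.2:ℝ)/(p.1:ℝ) - 1/((p.1:ℝ)*((p.1:ℝ)+(q' p.2 p.1 : ℝ))) with hLvdef
  -- Step 1 : rewrite the double sum
  have step1 : (∑ q ∈ Finset.Icc 1 Q,
        ∑ a ∈ (Finset.Icc 1 q).filter (fun a => Nat.Coprime a q),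
          ∫ β in (-(1 / ((q : ℝ) * ((q : ℝ) + (q' a q : ℝ)))))..(
              1 / ((q : ℝ) * ((q : ℝ) + (q'' a q : ℝ)))),
            F ((a : ℝ) / (q : ℝ) + β))
      = ∑ p ∈ S, (Φ (Rv p) - Φ (Lv p)) := by
    rw [← Finset.sum_finset_product' S (Finset.Icc 1 Q)
      (fun q => (Finset.Icc 1 q).filter (fun a => Nat.Coprime a q)) hmem
      (f := fun q a => ∫ β in (-(1 / ((q : ℝ) * ((q : ℝ) + (q' a q : ℝ)))))..(
              1 / ((q : ℝ) * ((q : ℝ) + (q'' a q : ℝ)))), F ((a : ℝ) / (q : ℝ) + β))]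
    apply Finset.sum_congr rfl
    intro p _
    rw [intervalIntegral.integral_comp_add_left]
    rw [show (p.2:ℝ)/(p.1:ℝ) + -(1/((p.1:ℝ)*((p.1:ℝ)+(q' p.2 p.1 : ℝ)))) = Lv p from by
      simp only [hLvdef]; ring]
    rw [show (p.2:ℝ)/(p.1:ℝ) + 1/((p.1:ℝ)*((p.1:ℝ)+(q'' p.2 p.1 : ℝ))) = Rv p from by
      simp only [hRvdef]]
    exact (hsub _ _).symm
  rw [step1]
  -- the successor and predecessor maps
  set σf : ℕ × ℕ → ℕ × ℕ :=
    fun p => (q'' p.2 p.1, (p.2 * q'' p.2 p.1 + 1) / p.1) with hσdef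
  set τf : ℕ × ℕ → ℕ × ℕ :=
    fun p => (q' p.2 p.1, (p.2 * q' p.2 p.1 - 1) / p.1) with hτdef
  set top : ℕ × ℕ := (1, 1) with htopdef
  set bot : ℕ × ℕ := (Q, 1) with hbotdef
  have htopS : top ∈ S := by
    rw [hmem']; exact ⟨le_refl 1, hQ, le_refl 1, le_refl 1, Nat.coprime_one_left 1⟩
  have hbotS : bot ∈ S := by
    rw [hmem']; exact ⟨hQ, le_refl Q, le_refl 1, hQ, Nat.coprime_one_left Q⟩
  -- main number-theoretic step for the successor map
  have main1 : ∀ p ∈ S.erase top,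
      (σf p).2 * p.1 = p.2 * (σf p).1 + 1 ∧ σf p ∈ S.erase bot ∧ q' (σf p).2 (σf p).1 = p.1 := by
    rintro ⟨q, a⟩ hp
    have hpS : (q, a) ∈ S := Finset.mem_of_mem_erase hp
    have hpne : (q, a) ≠ top := Finset.ne_of_mem_erase hp
    rw [hmem'] at hpS
    obtain ⟨hq1, hqQ, ha1, haq, hco⟩ := hpS
    dsimp only at hq1 hqQ ha1 haq hco
    obtain ⟨k1, k2, k3⟩ := hq'' a q hq1 hqQ hco
    set r := q'' a q with hrdef
    have hr1 : 1 ≤ r := by omega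
    have hrQ : r ≤ Q := by omega
    have haltq : a < q := by
      rcases Nat.lt_or_ge a q with h | h
      · exact h
      · exfalso
        have haq' : a = q := le_antisymm haq h
        have hco2 := hco
        rw [haq', Nat.Coprime, Nat.gcd_self] at hco2
        exact hpne (by simp [htopdef, Prod.ext_iff, haq', hco2])
    set b := (a * r + 1) / q with hbdef
    have hb : b * q = a * r + 1 := Nat.div_mul_cancel k3
    have hb1 : 1 ≤ b := by
      rcases Nat.eq_zero_or_pos b with h | h
      · rw [h, zero_mul] at hb; omega
      · exact h
    have hbr : b ≤ r := by
      have h5 : (a + 1) * r ≤ q * r := Nat.mul_le_mul_right r haltq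
      have h6 : b * q ≤ r * q := by
        calc b * q = a * r + 1 := hb
          _ ≤ a * r + r := by omega
          _ = (a + 1) * r := by ring
          _ ≤ q * r := h5
          _ = r * q := mul_comm q r
      exact Nat.le_of_mul_le_mul_right h6 hq1
    have hcobr : Nat.Coprime b r := by
      have h₁ : Nat.gcd b r ∣ a * r + 1 := hb ▸ Dvd.dvd.mul_right (Nat.gcd_dvd_left b r) q
      have h₂ : Nat.gcd b r ∣ a * r := Dvd.dvd.mul_left (Nat.gcd_dvd_right b r) a
      have := Nat.dvd_sub h₁ h₂
      simpa using this
    have hσS : σf (q, a) ∈ S := by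
      rw [hmem']
      exact ⟨hr1, hrQ, hb1, hbr, hcobr⟩
    have hσnb : σf (q, a) ≠ bot := by
      intro h
      rw [hbotdef, Prod.ext_iff] at h
      obtain ⟨h1', h2'⟩ := h
      simp only [hσdef] at h1' h2'
      rw [← hrdef] at h1'
      rw [← hrdef, ← hbdef] at h2'
      rw [h1', h2'] at hb
      have hQa : Q ≤ a * Q := Nat.le_mul_of_pos_left Q ha1
      simp only [one_mul] at hb
      linarith
    obtain ⟨g1, g2, g3⟩ := hq' b r hr1 hrQ hcobr
    have hq'pos : 1 ≤ q' b r := by omega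
    have hq'eq : q' b r = q := by
      refine window_eq' (Q := Q) (q := r) hr1 g1 (by omega) (by omega) hqQ ?_
      have h0 : 1 ≤ b * q' b r := Nat.mul_pos hb1 hq'pos
      have d1 : (r:ℤ) ∣ (b:ℤ) * (q' b r) - 1 := by
        have hd := (Nat.modEq_iff_dvd' h0).mp g3.symm
        have hd2 := Int.natCast_dvd_natCast.mpr hd
        rwa [Nat.cast_sub h0, Nat.cast_mul, Nat.cast_one] at hd2
      have d2 : (r:ℤ) ∣ (b:ℤ) * q - 1 := by
        refine ⟨a, ?_⟩
        have : (b:ℤ) * q = (a:ℤ) * r + 1 := by exact_mod_cast hb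
        linarith
      have d3 : (r:ℤ) ∣ ((q' b r : ℤ) - q) * b := by
        have hd := dvd_sub d1 d2
        convert hd using 1
        · rfl
        ring
      have hcop : IsCoprime (r:ℤ) (b:ℤ) := (Nat.isCoprime_iff_coprime.mpr hcobr).symm
      exact hcop.dvd_of_dvd_mul_right d3
    refine ⟨?_, Finset.mem_erase.mpr ⟨hσnb, hσS⟩, ?_⟩
    · simpa [hσdef, ← hrdef, ← hbdef] using hb
    · simpa [hσdef, ← hrdef, ← hbdef] using hq'eq
  -- main number-theoretic step for the predecessor map
  have main2 : ∀ p ∈ S.erase bot,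
      τf p ∈ S.erase top ∧ σf (τf p) = p := by
    rintro ⟨r, b⟩ hp
    have hpS : (r, b) ∈ S := Finset.mem_of_mem_erase hp
    have hpne : (r, b) ≠ bot := Finset.ne_of_mem_erase hp
    rw [hmem'] at hpS
    obtain ⟨hr1, hrQ, hb1, hbr, hcobr⟩ := hpS
    dsimp only at hr1 hrQ hb1 hbr hcobr
    obtain ⟨g1, g2, g3⟩ := hq' b r hr1 hrQ hcobr
    set q := q' b r with hqdef
    have hq1 : 1 ≤ q := by omega
    have hqQ : q ≤ Q := by omega
    have h0 : 1 ≤ b * q := Nat.mul_pos hb1 hq1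
    have hdvd : r ∣ b * q - 1 := (Nat.modEq_iff_dvd' h0).mp g3.symm
    set a := (b * q - 1) / r with hadef
    have ha : a * r = b * q - 1 := Nat.div_mul_cancel hdvd
    have ha' : a * r + 1 = b * q := by omega
    have ha1 : 1 ≤ a := by
      rcases Nat.eq_zero_or_pos a with h | h
      · exfalso
        rw [h, zero_mul] at ha'
        have hb' : b = 1 ∧ q = 1 :=
          ⟨Nat.eq_one_of_mul_eq_one_right ha'.symm, Nat.eq_one_of_mul_eq_one_left ha'.symm⟩
        have : r = Q := by omega
        exact hpne (by simp [hbotdef, Prod.ext_iff, this, hb'.1])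
      · exact h
    have haq : a < q := by
      have h6 : a * r < q * r := by
        have : b * q ≤ r * q := Nat.mul_le_mul_right q hbr
        calc a * r = b * q - 1 := ha
          _ < b * q := by omega
          _ ≤ r * q := this
          _ = q * r := mul_comm r q
      exact Nat.lt_of_mul_lt_mul_right h6
    have hcoaq : Nat.Coprime a q := by
      have h₁ : Nat.gcd a q ∣ a * r := Dvd.dvd.mul_right (Nat.gcd_dvd_left a q) r
      have h₂ : Nat.gcd a q ∣ a * r + 1 := ha' ▸ Dvd.dvd.mul_left (Nat.gcd_dvd_right a q) b
      have := Nat.dvd_sub h₂ h₁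
      simpa using this
    have hτS : τf (r, b) ∈ S := by
      rw [hmem']
      exact ⟨hq1, hqQ, ha1, le_of_lt haq, hcoaq⟩
    have hτnt : τf (r, b) ≠ top := by
      intro h
      rw [htopdef, Prod.ext_iff] at h
      obtain ⟨h1', h2'⟩ := h
      simp only [hτdef] at h1' h2'
      rw [← hqdef] at h1'
      rw [← hqdef, ← hadef] at h2'
      omega
    obtain ⟨k1, k2, k3⟩ := hq'' a q hq1 hqQ hcoaq
    have hq''eq : q'' a q = r := by
      refine window_eq' (Q := Q) (q := q) hq1 k1 (by omega) (by omega) hrQ ?_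
      have d1 : (q:ℤ) ∣ (a:ℤ) * (q'' a q) + 1 := by
        have hd2 := Int.natCast_dvd_natCast.mpr k3
        push_cast at hd2
        exact hd2
      have d2 : (q:ℤ) ∣ (a:ℤ) * r + 1 := by
        refine ⟨b, ?_⟩
        have : (a:ℤ) * r + 1 = (b:ℤ) * q := by exact_mod_cast ha'
        linarith
      have d3 : (q:ℤ) ∣ ((q'' a q : ℤ) - r) * a := by
        have hd := dvd_sub d1 d2
        convert hd using 1
        · rfl
        ring
      have hcop : IsCoprime (q:ℤ) (a:ℤ) := (Nat.isCoprime_iff_coprime.mpr hcoaq).symm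
      exact hcop.dvd_of_dvd_mul_right d3
    refine ⟨Finset.mem_erase.mpr ⟨hτnt, hτS⟩, ?_⟩
    have hbval : (a * q'' a q + 1) / q = b := by
      rw [hq''eq, ha', Nat.mul_div_cancel _ hq1]
    have : σf (τf (r, b)) = σf (q, a) := by
      simp only [hτdef, hσdef, ← hqdef, ← hadef]
    rw [this]
    simp only [hσdef]
    rw [Prod.ext_iff]
    exact ⟨hq''eq, hbval⟩
  -- left inverse on S.erase top
  have hleftinv : ∀ p ∈ S.erase top, τf (σf p) = p := by
    rintro ⟨q, a⟩ hp
    obtain ⟨hb0, hσmem, hq'eq0⟩ := main1 (q, a) hp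
    have hb : (σf (q, a)).2 * q = a * (σf (q, a)).1 + 1 := hb0
    have hq'eq : q' (σf (q, a)).2 (σf (q, a)).1 = q := hq'eq0
    have haval : ((σf (q, a)).2 * q' (σf (q, a)).2 (σf (q, a)).1 - 1) / (σf (q, a)).1 = a := by
      rw [hq'eq]
      rw [show (σf (q, a)).2 * q - 1 = a * (σf (q, a)).1 from by omega]
      have hσS : σf (q, a) ∈ S := Finset.mem_of_mem_erase hσmem
      have hr1 : 1 ≤ (σf (q, a)).1 := ((hmem' (σf (q, a))).mp hσS).1
      exact Nat.mul_div_cancel _ hr1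
    have : τf (σf (q, a)) = (q' (σf (q, a)).2 (σf (q, a)).1,
        ((σf (q, a)).2 * q' (σf (q, a)).2 (σf (q, a)).1 - 1) / (σf (q, a)).1) := by
      simp only [hτdef]
    rw [this, Prod.ext_iff]
    exact ⟨hq'eq, haval⟩
  -- value compatibility
  have hval : ∀ p ∈ S.erase top, Φ (Rv p) = Φ (Lv (σf p)) := by
    rintro ⟨q, a⟩ hp
    obtain ⟨hb0, hσmem, hq'eq0⟩ := main1 (q, a) hp
    have hb : (σf (q, a)).2 * q = a * (σf (q, a)).1 + 1 := hb0
    have hq'eq : q' (σf (q, a)).2 (σf (q, a)).1 = q := hq'eq0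
    have hpS : (q, a) ∈ S := Finset.mem_of_mem_erase hp
    have hqa : 1 ≤ q ∧ q ≤ Q ∧ 1 ≤ a ∧ a ≤ q ∧ Nat.Coprime a q := (hmem' (q, a)).mp hpS
    obtain ⟨hq1, hqQ, ha1, haq, hco⟩ := hqa
    have hσS : σf (q, a) ∈ S := Finset.mem_of_mem_erase hσmem
    have hσc : 1 ≤ (σf (q, a)).1 ∧ (σf (q, a)).1 ≤ Q ∧ 1 ≤ (σf (q, a)).2 ∧
        (σf (q, a)).2 ≤ (σf (q, a)).1 ∧ Nat.Coprime (σf (q, a)).2 (σf (q, a)).1 :=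
      (hmem' (σf (q, a))).mp hσS
    obtain ⟨hr1, hrQ, hb1, hbr, hcobr⟩ := hσc
    congr 1
    simp only [hRvdef, hLvdef]
    rw [hq'eq]
    exact endpoint_eq' hq1 hr1 hb
  -- telescoping
  have hbij : ∑ p ∈ S.erase bot, Φ (Lv p) = ∑ p ∈ S.erase top, Φ (Rv p) := by
    symm
    refine Finset.sum_nbij' σf τf (fun p hp => (main1 p hp).2.1)
      (fun p hp => (main2 p hp).1) hleftinv (fun p hp => (main2 p hp).2) hval
  have hsplit : ∑ p ∈ S, (Φ (Rv p) - Φ (Lv p)) = Φ (Rv top) - Φ (Lv bot) := by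
    rw [Finset.sum_sub_distrib]
    rw [← Finset.add_sum_erase S (fun p => Φ (Rv p)) htopS]
    rw [← Finset.add_sum_erase S (fun p => Φ (Lv p)) hbotS]
    rw [hbij]
    ring
  rw [hsplit]
  -- compute the extreme endpoints
  have hq''11 : q'' 1 1 = Q := by
    obtain ⟨k1, k2, _⟩ := hq'' 1 1 le_rfl hQ (Nat.coprime_one_left 1)
    omega
  have hq'1Q : q' 1 Q = 1 := by
    obtain ⟨g1, g2, g3⟩ := hq' 1 Q hQ le_rfl (Nat.coprime_one_left Q)
    refine window_eq' (Q := Q) (q := Q) hQ g1 (by omega) (by omega) hQ ?_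
    have hd := (Nat.modEq_iff_dvd' (by omega : 1 ≤ 1 * q' 1 Q)).mp g3.symm
    have hd2 := Int.natCast_dvd_natCast.mpr hd
    rw [Nat.cast_sub (by omega : 1 ≤ 1 * q' 1 Q)] at hd2
    push_cast at hd2
    simpa using hd2
  have hRtop : Rv top = 1/((Q:ℝ)+1) + 1 := by
    simp only [hRvdef, htopdef, hq''11]
    push_cast
    rw [one_mul]
    field_simp
    ring
  have hLbot : Lv bot = 1/((Q:ℝ)+1) := by
    simp only [hLvdef, hbotdef, hq'1Q]
    have hQ0 : (Q:ℝ) ≠ 0 := Nat.cast_ne_zero.2 (by omega)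
    have hQ1 : (Q:ℝ) + 1 ≠ 0 := by positivity
    push_cast
    field_simp
    ring
  rw [hRtop, hLbot, hsub]
  have hper' : Function.Periodic F 1 := hper
  have hfin := hper'.intervalIntegral_add_eq (1/((Q:ℝ)+1)) 0
  rw [zero_add] at hfin
  exact hfin.symm
end
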